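/- Let w be a permutation of {1,…,n} with shape α. Then there exist unique permutations u and v of {1,…,n} such that w = u·e_α·v with inv(w) = inv(u) + inv(e_α) + inv(v); moreover, for these u and v one has Φ(w) = u·e_α and Φ_inv(w) = e_α·v. -/

import Mathlib

open scoped Classical

noncomputable section

namespace RajRegularity

variable {n : ℕ}

/-- Maximal length of an increasing subsequence of `w(i), …, w(n)` beginning with `w(i)`:
the largest cardinality of a set `s` of positions that contains `i`, consists of positions
`≥ i`, and on which `w` is strictly increasing. -/
def lisFrom (w : Equiv.Perm (Fin n)) (i : Fin n) : ℕ :=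
  (Finset.univ.filter fun s : Finset (Fin n) =>
      i ∈ s ∧ (∀ j ∈ s, i ≤ j) ∧ ∀ j ∈ s, ∀ k ∈ s, j < k → w j < w k).sup Finset.card

/-- `rajCode w i = (n − i + 1) −` (maximal length of an increasing subsequence of
`w(i), …, w(n)` beginning with `w(i)`); here positions are 0-based, so the number of
positions `≥ i` is `n - i`. -/
def rajCode (w : Equiv.Perm (Fin n)) (i : Fin n) : ℕ :=
  (n - (i : ℕ)) - lisFrom w i

/-- The Rajchgot index `raj w = Σᵢ rajCode w i`. -/
def raj (w : Equiv.Perm (Fin n)) : ℕ := ∑ i, rajCode w i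

/-- The number of inversions of `w`: pairs of positions `i < j` with `w i > w j`. -/
def invNum (w : Equiv.Perm (Fin n)) : ℕ :=
  (Finset.univ.filter fun p : Fin n × Fin n => p.1 < p.2 ∧ w p.2 < w p.1).card

/-- The `i`-th entry of the inv code: `ℓ_i(w) = #{ j : i < j, w j < w i }`. -/
def ellCode (w : Equiv.Perm (Fin n)) (i : Fin n) : ℕ :=
  (Finset.univ.filter fun j : Fin n => i < j ∧ w j < w i).card

/-- The set of descent positions of `w` (0-based position `j` with `w j > w (j+1)`). -/
def descents (w : Equiv.Perm (Fin n)) : Finset (Fin n) :=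
  Finset.univ.filter fun j : Fin n =>
    if h : (j : ℕ) + 1 < n then w ⟨(j : ℕ) + 1, h⟩ < w j else False

/-- The major index: the sum of the (1-based) descent positions of `w`. -/
def maj (w : Equiv.Perm (Fin n)) : ℕ := ∑ j ∈ descents w, ((j : ℕ) + 1)

/-- `mCode w i`: the number of descents of `w` at positions `≥ i`. -/
def mCode (w : Equiv.Perm (Fin n)) (i : Fin n) : ℕ :=
  ((descents w).filter fun j => i ≤ j).card

/-- `w` is dominant iff it avoids the pattern 132. -/
def Dominant (w : Equiv.Perm (Fin n)) : Prop :=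
  ¬ ∃ i j k : Fin n, i < j ∧ j < k ∧ w i < w k ∧ w k < w j

/-- `w` is fireworks iff there are no positions `i < j` with `w j < w (j+1) < w i`. -/
def Fireworks (w : Equiv.Perm (Fin n)) : Prop :=
  ¬ ∃ (i j : Fin n) (h : (j : ℕ) + 1 < n),
      i < j ∧ w j < w ⟨(j : ℕ) + 1, h⟩ ∧ w ⟨(j : ℕ) + 1, h⟩ < w i

/-- `w` is inverse fireworks iff `w⁻¹` is fireworks. -/
def InvFireworks (w : Equiv.Perm (Fin n)) : Prop := Fireworks w⁻¹

/-- `w` is a valley permutation: for some `a`, it is strictly decreasing on positions `≤ a`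
and strictly increasing on positions `≥ a`. -/
def Valley (w : Equiv.Perm (Fin n)) : Prop :=
  ∃ a : ℕ, (∀ i j : Fin n, i < j → (j : ℕ) ≤ a → w j < w i) ∧
    ∀ i j : Fin n, a ≤ (i : ℕ) → i < j → w i < w j

/-- `eps w i` is the (1-based) blob index `ε_i(w) = i + r_i(w)`. -/
def eps (w : Equiv.Perm (Fin n)) (i : Fin n) : ℕ := (i : ℕ) + 1 + rajCode w i

/-- The shape of `w`: `α_k(w) = #{ i : ε_i(w) = k }` (here `k : Fin n` stands for the
1-based index `k + 1`). -/
def shape (w : Equiv.Perm (Fin n)) : Fin n → ℕ := fun k =>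
  (Finset.univ.filter fun i : Fin n => eps w i = (k : ℕ) + 1).card

/-- Dominance order on shapes: `α ⪰ β` iff every tail sum of `α` is at least the
corresponding tail sum of `β`. -/
def Dominates (α β : Fin n → ℕ) : Prop :=
  ∀ m : Fin n,
    ∑ k ∈ Finset.univ.filter (fun k : Fin n => m ≤ k), β k ≤
      ∑ k ∈ Finset.univ.filter (fun k : Fin n => m ≤ k), α k

/-- Right weak order: `u ≤_R w` iff `w = u * v` length-additively. -/
def leR (u w : Equiv.Perm (Fin n)) : Prop :=
  ∃ v : Equiv.Perm (Fin n), w = u * v ∧ invNum w = invNum u + invNum v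

/-- Left weak order: `u ≤_L w` iff `w = v * u` length-additively. -/
def leL (u w : Equiv.Perm (Fin n)) : Prop :=
  ∃ v : Equiv.Perm (Fin n), w = v * u ∧ invNum w = invNum v + invNum u

/-- Two-sided weak order: the transitive closure of the union of left and right weak
orders (both are reflexive, so we may use the reflexive-transitive closure). -/
def leLR (u w : Equiv.Perm (Fin n)) : Prop :=
  Relation.ReflTransGen (fun a b : Equiv.Perm (Fin n) => leL a b ∨ leR a b) u w

/-- The maximum of the block of the set partition `π(w)` containing the value `v`;
the block of `v` is `{ v' : ε_{w⁻¹ v'}(w) = ε_{w⁻¹ v}(w) }`. -/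
def blockMax (w : Equiv.Perm (Fin n)) (v : Fin n) : ℕ :=
  ((Finset.univ.filter fun v' : Fin n => eps w (w⁻¹ v') = eps w (w⁻¹ v)).max'
      ⟨v, Finset.mem_filter.mpr ⟨Finset.mem_univ v, rfl⟩⟩).val

/-- The fireworks map `Φ`: the one-line word of `Φ w` lists the blocks of `π(w)` in
increasing order of their maxima, each block written in decreasing order.  Equivalently,
`Φ w` sorts the values by the key (max of block, value reversed), lexicographically. -/
def Phi (w : Equiv.Perm (Fin n)) : Equiv.Perm (Fin n) :=
  Tuple.sort fun v : Fin n => n * blockMax w v + (n - 1 - (v : ℕ))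

/-- The inverse fireworks map `Φ_inv w = Φ(w⁻¹)⁻¹`. -/
def PhiInv (w : Equiv.Perm (Fin n)) : Equiv.Perm (Fin n) := (Phi w⁻¹)⁻¹

/-- Partial sums of a sequence of block sizes. -/
def psum (a : ℕ → ℕ) (m : ℕ) : ℕ := ∑ j ∈ Finset.range m, a j

/-- The index of the block (interval `[psum a m, psum a (m+1))`) containing the value `v`. -/
def blockIdx (n : ℕ) (a : ℕ → ℕ) (v : Fin n) : ℕ :=
  ((Finset.range n).filter fun m => psum a (m + 1) ≤ (v : ℕ)).card

/-- The layered permutation with block sizes `a 0, a 1, …`: it reverses each of the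
consecutive intervals `[psum a m, psum a (m+1))` of `{0, …, n-1}`.  Equivalently, its
one-line word sorts the values by (block index, value reversed) lexicographically. -/
def layered (n : ℕ) (a : ℕ → ℕ) : Equiv.Perm (Fin n) :=
  Tuple.sort fun v : Fin n => n * blockIdx n a v + (n - 1 - (v : ℕ))

/-- The layered permutation `e_α` associated to a shape `α : Fin n → ℕ`. -/
def eOf (α : Fin n → ℕ) : Equiv.Perm (Fin n) :=
  layered n fun m => if h : m < n then α ⟨m, h⟩ else 0

/-!
Call `lisFrom w i` the level of the position `i` and of the value `w i`; by `eps_add_lisFrom` the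
blocks of `π(w)` are the level sets of values. A value of level `l ≥ 2` is followed, further right
and higher up, by a value of level `l - 1`. Hence block maxima decrease as the level grows, `Φ(w)`
lists the values by decreasing level, each level in decreasing order, and the blocks of
`e = e_{α(w)}` are the intervals of positions on which `Φ(w)` runs through one level.

For `x = u·e`, the factorization `w = u·e·v` is length-additive iff `x` decreases on each block of
`e` and every inversion of `x⁻¹·w` is one of `w`. `Φ(w)` has both properties. Conversely, for such
an `x` an induction on the level shows that `x i` has at most the level of `Φ(w) i`; both being
rearrangements of the same levels, they agree, which forces `x = Φ(w)`. The claim about `Φ_inv` is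
the one about `Φ` for `w⁻¹ = v⁻¹·e·u⁻¹`, which has the same shape.
-/

open Finset Equiv

lemma mul_add_lt_mul_add_iff {m A B a b : ℕ} (ha : a < m) (hb : b < m) :
    m * A + a < m * B + b ↔ A < B ∨ A = B ∧ a < b := by
  rcases lt_trichotomy A B with h | rfl | h
  · have : m * A + m ≤ m * B := by nlinarith
    omega
  · omega
  · have : m * B + m ≤ m * A := by nlinarith
    omega

lemma eq_sort_iff_strictMono_comp {α : Type*} [LinearOrder α] {f : Fin n → α}
    (hf : Function.Injective f) {σ : Perm (Fin n)} : σ = Tuple.sort f ↔ StrictMono (f ∘ σ) := by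
  rw [Tuple.eq_sort_iff]
  exact ⟨fun h => h.1.strictMono_of_injective (hf.comp σ.injective),
    fun h => ⟨h.monotone, fun i j hij heq => absurd heq (h hij).ne⟩⟩

lemma eq_sort_revKey_iff {A : Fin n → ℕ} {σ : Perm (Fin n)} :
    σ = Tuple.sort (fun v : Fin n => n * A v + (n - 1 - (v : ℕ))) ↔
      Monotone (A ∘ σ) ∧ ∀ i j, i < j → A (σ i) = A (σ j) → σ j < σ i := by
  have key : ∀ v v' : Fin n, n * A v + (n - 1 - (v : ℕ)) < n * A v' + (n - 1 - (v' : ℕ)) ↔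
      A v < A v' ∨ A v = A v' ∧ v' < v := fun v v' => by
    rw [mul_add_lt_mul_add_iff (by omega) (by omega), Fin.lt_def]
    omega
  have hinj : Function.Injective fun v : Fin n => n * A v + (n - 1 - (v : ℕ)) := by
    intro v v' h
    have h1 := (key v v').not.mp (le_of_eq h.symm).not_gt
    have h2 := (key v' v).not.mp (le_of_eq h).not_gt
    simp only [Fin.lt_def, Fin.ext_iff] at h1 h2 ⊢
    omega
  rw [eq_sort_iff_strictMono_comp hinj, StrictMono]
  simp only [Function.comp_apply, key]
  refine ⟨fun h => ⟨monotone_iff_forall_lt.mpr fun i j hij => ?_, fun i j hij heq => ?_⟩,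
    fun h i j hij => ?_⟩
  · rcases h hij with h | h
    exacts [h.le, h.1.le]
  · exact ((h hij).resolve_left heq.not_lt).2
  · rcases (h.1 hij.le).lt_or_eq with hlt | heq
    exacts [Or.inl hlt, Or.inr ⟨heq, h.2 i j hij heq⟩]

def IsChainFrom (w : Perm (Fin n)) (i : Fin n) (s : Finset (Fin n)) : Prop :=
  i ∈ s ∧ (∀ j ∈ s, i ≤ j) ∧ StrictMonoOn w s

section Chains

variable {w : Perm (Fin n)} {i j : Fin n}

lemma lisFrom_eq_sup (w : Perm (Fin n)) (i : Fin n) :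
    lisFrom w i = (univ.filter (IsChainFrom w i)).sup card := by
  rw [lisFrom]
  congr 1
  ext s
  simp [IsChainFrom, StrictMonoOn]

lemma card_le_lisFrom {s : Finset (Fin n)} (hs : IsChainFrom w i s) : #s ≤ lisFrom w i :=
  lisFrom_eq_sup w i ▸ le_sup (mem_filter.mpr ⟨mem_univ _, hs⟩)

lemma exists_isChainFrom_card_eq (w : Perm (Fin n)) (i : Fin n) :
    ∃ s, IsChainFrom w i s ∧ #s = lisFrom w i := by
  have hsingle : IsChainFrom w i {i} := by simp [IsChainFrom]
  obtain ⟨s, hs, h⟩ := exists_mem_eq_sup _ ⟨{i}, mem_filter.mpr ⟨mem_univ _, hsingle⟩⟩ card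
  exact ⟨s, (mem_filter.mp hs).2, ((lisFrom_eq_sup w i).trans h).symm⟩

lemma one_le_lisFrom (w : Perm (Fin n)) (i : Fin n) : 1 ≤ lisFrom w i := by
  simpa using card_le_lisFrom (w := w) (i := i) (s := {i}) (by simp [IsChainFrom])

lemma lisFrom_le (w : Perm (Fin n)) (i : Fin n) : lisFrom w i ≤ n - i := by
  obtain ⟨s, hs, hcard⟩ := exists_isChainFrom_card_eq w i
  rw [← hcard, ← Fin.card_Ici]
  exact card_le_card fun j hj => mem_Ici.mpr (hs.2.1 j hj)

lemma lisFrom_lt_of_lt (hij : i < j) (hw : w i < w j) : lisFrom w j < lisFrom w i := by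
  obtain ⟨s, ⟨hjs, hge, hmono⟩, hcard⟩ := exists_isChainFrom_card_eq w j
  have hi : i ∉ s := fun h => (hge i h).not_gt hij
  have hchain : IsChainFrom w i (insert i s) := by
    refine ⟨mem_insert_self i s, ?_, ?_⟩
    · simp only [mem_insert, forall_eq_or_imp, le_refl, true_and]
      exact fun k hk => hij.le.trans (hge k hk)
    · rw [coe_insert, strictMonoOn_insert_iff_of_forall_ge fun k hk => hij.le.trans (hge k hk)]
      refine ⟨fun k hk _ => ?_, hmono⟩
      rcases (hge k hk).eq_or_lt with rfl | hjk
      exacts [hw, hw.trans (hmono hjs hk hjk)]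
  have := card_le_lisFrom hchain
  rw [card_insert_of_notMem hi] at this
  omega

lemma exists_lisFrom_add_one_eq (h : 2 ≤ lisFrom w i) :
    ∃ j, i < j ∧ w i < w j ∧ lisFrom w j + 1 = lisFrom w i := by
  obtain ⟨s, ⟨his, hge, hmono⟩, hcard⟩ := exists_isChainFrom_card_eq w i
  have hne : (s.erase i).Nonempty := by
    rw [← card_pos, card_erase_of_mem his]
    omega
  set j := (s.erase i).min' hne
  have hjs : j ∈ s.erase i := min'_mem _ _
  have hij : i < j := (hge j (mem_of_mem_erase hjs)).lt_of_ne (ne_of_mem_erase hjs).symm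
  have hw : w i < w j := hmono his (mem_of_mem_erase hjs) hij
  have htail : IsChainFrom w j (s.erase i) :=
    ⟨hjs, fun k hk => min'_le _ _ hk, hmono.mono fun k hk => mem_of_mem_erase hk⟩
  have := card_le_lisFrom htail
  rw [card_erase_of_mem his] at this
  have := lisFrom_lt_of_lt hij hw
  exact ⟨j, hij, hw, by omega⟩

lemma IsChainFrom.image {s : Finset (Fin n)} (hs : IsChainFrom w i s) :
    IsChainFrom w⁻¹ (w i) (s.image w) := by
  obtain ⟨his, hge, hmono⟩ := hs
  refine ⟨mem_image_of_mem w his, ?_, ?_⟩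
  · simp only [mem_image, forall_exists_index, and_imp, forall_apply_eq_imp_iff₂]
    exact fun k hk => hmono.monotoneOn his hk (hge k hk)
  · intro a ha b hb hab
    simp only [coe_image, Set.mem_image, mem_coe] at ha hb
    obtain ⟨a, ha, rfl⟩ := ha
    obtain ⟨b, hb, rfl⟩ := hb
    simpa using (hmono.lt_iff_lt ha hb).mp hab

lemma lisFrom_le_lisFrom_inv (w : Perm (Fin n)) (i : Fin n) :
    lisFrom w i ≤ lisFrom w⁻¹ (w i) := by
  obtain ⟨s, hs, hcard⟩ := exists_isChainFrom_card_eq w i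
  rw [← hcard, ← card_image_of_injective s w.injective]
  exact card_le_lisFrom hs.image

@[simp]
lemma lisFrom_inv_apply (w : Perm (Fin n)) (i : Fin n) : lisFrom w⁻¹ (w i) = lisFrom w i :=
  le_antisymm (by simpa using lisFrom_le_lisFrom_inv w⁻¹ (w i)) (lisFrom_le_lisFrom_inv w i)

end Chains

def level (w : Perm (Fin n)) (v : Fin n) : ℕ := lisFrom w (w⁻¹ v)

section Levels

variable {w : Perm (Fin n)}

@[simp]
lemma level_apply (w : Perm (Fin n)) (i : Fin n) : level w (w i) = lisFrom w i := by
  simp [level]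

lemma one_le_level (w : Perm (Fin n)) (v : Fin n) : 1 ≤ level w v := one_le_lisFrom w _

lemma level_le (w : Perm (Fin n)) (v : Fin n) : level w v ≤ n :=
  (lisFrom_le w _).trans (Nat.sub_le _ _)

lemma level_lt_of_lt {c d : Fin n} (hcd : c < d) (h : w⁻¹ c < w⁻¹ d) : level w d < level w c :=
  lisFrom_lt_of_lt h (by simpa using hcd)

lemma exists_level_add_one_eq {c : Fin n} (h : 2 ≤ level w c) :
    ∃ d, c < d ∧ w⁻¹ c < w⁻¹ d ∧ level w d + 1 = level w c := by
  obtain ⟨j, hij, hw, hl⟩ := exists_lisFrom_add_one_eq h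
  exact ⟨w j, by simpa using hw, by simpa using hij, by rw [level_apply]; exact hl⟩

lemma exists_lt_level_eq {l : ℕ} (hl : 1 ≤ l) {c : Fin n} (h : l < level w c) :
    ∃ d, c < d ∧ level w d = l := by
  obtain ⟨k, hk⟩ := Nat.exists_eq_add_of_lt h
  induction k generalizing c with
  | zero =>
    obtain ⟨d, hcd, -, hd⟩ := exists_level_add_one_eq (w := w) (c := c) (by omega)
    exact ⟨d, hcd, by omega⟩
  | succ k ih =>
    obtain ⟨d, hcd, -, hd⟩ := exists_level_add_one_eq (w := w) (c := c) (by omega)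
    obtain ⟨d', hdd', hd'⟩ := ih (c := d) (by omega) (by omega)
    exact ⟨d', hcd.trans hdd', hd'⟩

lemma eps_add_lisFrom (w : Perm (Fin n)) (i : Fin n) : eps w i + lisFrom w i = n + 1 := by
  have := lisFrom_le w i
  have := one_le_lisFrom w i
  have := i.isLt
  simp only [eps, rajCode]
  omega

lemma shape_eq_card (w : Perm (Fin n)) (k : Fin n) :
    shape w k = #{i | lisFrom w i + k = n} := by
  rw [shape]
  congr 1
  ext i
  have := eps_add_lisFrom w i
  simp only [mem_filter, mem_univ, true_and]
  omega

lemma shape_inv (w : Perm (Fin n)) : shape w⁻¹ = shape w := by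
  ext k
  simp only [shape_eq_card]
  refine card_equiv (w⁻¹ : Perm (Fin n)) fun i => ?_
  simp only [mem_filter, mem_univ, true_and]
  rw [← lisFrom_inv_apply w (w⁻¹ i)]
  simp

end Levels

section Phi

variable {w : Perm (Fin n)} {a b : Fin n}

lemma mem_filter_eps_iff :
    b ∈ ({v' | eps w (w⁻¹ v') = eps w (w⁻¹ a)} : Finset (Fin n)) ↔ level w b = level w a := by
  have := eps_add_lisFrom w (w⁻¹ a)
  have := eps_add_lisFrom w (w⁻¹ b)
  simp only [mem_filter, mem_univ, true_and, level]
  omega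

lemma le_blockMax (h : level w b = level w a) : (b : ℕ) ≤ blockMax w a :=
  le_max' _ _ (mem_filter_eps_iff.mpr h)

lemma exists_level_eq_blockMax (w : Perm (Fin n)) (a : Fin n) :
    ∃ b, level w b = level w a ∧ (b : ℕ) = blockMax w a :=
  ⟨_, mem_filter_eps_iff.mp (max'_mem _ _), rfl⟩

lemma blockMax_congr (h : level w a = level w b) : blockMax w a = blockMax w b := by
  obtain ⟨a', ha', ha⟩ := exists_level_eq_blockMax w a
  obtain ⟨b', hb', hb⟩ := exists_level_eq_blockMax w b
  have := le_blockMax (w := w) (a := b) (ha'.trans h)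
  have := le_blockMax (w := w) (a := a) (hb'.trans h.symm)
  omega

lemma blockMax_lt_of_level_lt (h : level w b < level w a) : blockMax w a < blockMax w b := by
  obtain ⟨a', ha', ha⟩ := exists_level_eq_blockMax w a
  obtain ⟨d, had, hd⟩ := exists_lt_level_eq (one_le_level w b) (ha' ▸ h)
  rw [← ha]
  exact had.trans_le (le_blockMax hd)

lemma phi_eq_iff {x : Perm (Fin n)} : x = Phi w ↔
    Antitone (level w ∘ x) ∧ ∀ i j, i < j → level w (x i) = level w (x j) → x j < x i := by
  have hlt : ∀ a b : Fin n, blockMax w a < blockMax w b ↔ level w b < level w a := by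
    intro a b
    refine ⟨fun h => ?_, blockMax_lt_of_level_lt⟩
    rcases lt_trichotomy (level w a) (level w b) with hab | hab | hab
    · exact absurd (blockMax_lt_of_level_lt hab) h.not_gt
    · exact absurd (blockMax_congr hab) h.ne
    · exact hab
  have hle : ∀ a b : Fin n, blockMax w a ≤ blockMax w b ↔ level w b ≤ level w a := fun a b =>
    not_lt.symm.trans ((hlt b a).not.trans not_lt)
  have heq : ∀ a b : Fin n, blockMax w a = blockMax w b ↔ level w a = level w b := fun a b => by
    rw [le_antisymm_iff, le_antisymm_iff, hle, hle, and_comm]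
  rw [Phi, eq_sort_revKey_iff]
  simp only [Monotone, Antitone, Function.comp_apply, hle, heq]

lemma antitone_level_comp_phi (w : Perm (Fin n)) : Antitone (level w ∘ Phi w) :=
  (phi_eq_iff.mp rfl).1

lemma phi_lt_phi_of_level_eq {i j : Fin n} (hij : i < j)
    (h : level w (Phi w i) = level w (Phi w j)) : Phi w j < Phi w i :=
  (phi_eq_iff.mp rfl).2 i j hij h

lemma card_level_phi (w : Perm (Fin n)) (p : ℕ → Prop) [DecidablePred p] :
    #{i | p (level w (Phi w i))} = #{i | p (lisFrom w i)} :=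
  card_equiv ((Phi w).trans w.symm) fun i => by simp only [mem_filter]; simp [level]

end Phi

section Layered

variable {a : ℕ → ℕ} {i j : Fin n}

lemma blockIdx_mono (a : ℕ → ℕ) : Monotone (blockIdx n a) := fun _ _ hvv' =>
  card_le_card fun m hm => by
    rw [mem_filter] at hm ⊢
    exact ⟨hm.1, hm.2.trans hvv'⟩

@[simp]
lemma blockIdx_layered (i : Fin n) : blockIdx n a (layered n a i) = blockIdx n a i := by
  have h := Tuple.comp_sort_eq_comp_iff_monotone.mpr
    (eq_sort_revKey_iff (σ := layered n a) (A := blockIdx n a) |>.mp rfl).1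
  rw [Tuple.sort_eq_refl_iff_monotone.mpr (blockIdx_mono a)] at h
  exact congrFun h i

lemma layered_lt_layered_iff (hij : i < j) :
    layered n a j < layered n a i ↔ blockIdx n a i = blockIdx n a j := by
  refine ⟨fun h => le_antisymm (blockIdx_mono a hij.le) (by simpa using blockIdx_mono a h.le),
    fun h => ?_⟩
  exact (eq_sort_revKey_iff (σ := layered n a) (A := blockIdx n a) |>.mp rfl).2 i j hij
    (by simpa using h)

lemma layered_inv : (layered n a)⁻¹ = layered n a := by
  have hblock : ∀ i, blockIdx n a ((layered n a)⁻¹ i) = blockIdx n a i := fun i => by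
    simpa using (blockIdx_layered (a := a) ((layered n a)⁻¹ i)).symm
  refine eq_sort_revKey_iff.mpr ⟨fun i j hij => by
    simpa only [Function.comp_apply, hblock] using blockIdx_mono a hij, fun i j hij h => ?_⟩
  by_contra hle
  have hlt := (not_lt.mp hle).lt_of_ne fun he => hij.ne (by simpa using he)
  have := (layered_lt_layered_iff hlt).mpr h
  simp only [Perm.coe_inv, apply_symm_apply] at this
  exact this.not_gt hij

lemma eOf_inv (α : Fin n → ℕ) : (eOf α)⁻¹ = eOf α := layered_inv

lemma eOf_mul_self (α : Fin n → ℕ) : eOf α * eOf α = 1 := by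
  nth_rw 1 [← eOf_inv]
  exact inv_mul_cancel _

end Layered

section Blocks

variable {w : Perm (Fin n)}

lemma psum_shape {m : ℕ} (hm : m ≤ n) :
    psum (fun k => if h : k < n then shape w ⟨k, h⟩ else 0) m = #{i | n < lisFrom w i + m} := by
  induction m with
  | zero =>
    simp only [psum, range_zero, sum_empty, add_zero]
    exact (card_eq_zero.mpr (filter_false_of_mem fun i _ =>
      ((lisFrom_le w i).trans (Nat.sub_le _ _)).not_gt)).symm
  | succ m ih =>
    rw [psum, sum_range_succ, ← psum, ih (by omega), dif_pos (by omega), shape_eq_card,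
      ← card_union_of_disjoint (disjoint_filter.mpr fun i _ h h' => by
        rw [Fin.val_mk] at h'
        omega)]
    congr 1
    ext i
    simp only [mem_union, mem_filter, mem_univ, true_and]
    omega

lemma blockIdx_shape_add_level_phi (i : Fin n) :
    blockIdx n (fun k => if h : k < n then shape w ⟨k, h⟩ else 0) i + level w (Phi w i) = n := by
  have hrange : (range n).filter (fun m =>
      psum (fun k => if h : k < n then shape w ⟨k, h⟩ else 0) (m + 1) ≤ (i : ℕ)) =
      range (n - level w (Phi w i)) := by
    ext m
    simp only [mem_filter, mem_range]
    by_cases hm : m < n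
    · have hcard : #{j | n < lisFrom w j + (m + 1)} = #{j | n - m ≤ level w (Phi w j)} := by
        rw [card_level_phi w (n - m ≤ ·)]
        congr 1
        ext j
        simp only [mem_filter, mem_univ, true_and]
        omega
      have hrun := Tuple.lt_card_ge_iff_apply_ge_of_antitone (antitone_level_comp_phi w)
        (j := i) (a := n - m)
      simp only [Function.comp_apply] at hrun
      rw [psum_shape hm, hcard]
      omega
    · omega
  rw [blockIdx, hrange, card_range]
  have := level_le w (Phi w i)
  omega

lemma eOf_shape_lt_iff {i j : Fin n} (hij : i < j) :
    eOf (shape w) j < eOf (shape w) i ↔ level w (Phi w i) = level w (Phi w j) := by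
  rw [eOf, layered_lt_layered_iff hij]
  have := blockIdx_shape_add_level_phi (w := w) i
  have := blockIdx_shape_add_level_phi (w := w) j
  omega

end Blocks

section Inversions

variable {σ τ : Perm (Fin n)}

lemma invNum_inv (σ : Perm (Fin n)) : invNum σ⁻¹ = invNum σ :=
  card_equiv ((Equiv.prodComm _ _).trans (σ⁻¹.prodCongr σ⁻¹)) fun p => by
    simp only [mem_filter]
    simp [and_comm]

lemma invNum_add_invNum (σ τ : Perm (Fin n)) :
    invNum σ + invNum τ = invNum (σ * τ) +
      2 * #{p : Fin n × Fin n | p.1 < p.2 ∧ τ p.2 < τ p.1 ∧ σ (τ p.1) < σ (τ p.2)} := by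
  have hσ : invNum σ = #{p : Fin n × Fin n | τ p.1 < τ p.2 ∧ σ (τ p.2) < σ (τ p.1)} :=
    (card_equiv (τ.prodCongr τ) fun p => by simp).symm
  have hστ : invNum (σ * τ) = #{p : Fin n × Fin n | p.1 < p.2 ∧ σ (τ p.2) < σ (τ p.1)} := rfl
  have hswap : #{p : Fin n × Fin n | p.1 < p.2 ∧ τ p.2 < τ p.1 ∧ σ (τ p.1) < σ (τ p.2)} =
      #{p : Fin n × Fin n | p.2 < p.1 ∧ τ p.1 < τ p.2 ∧ σ (τ p.2) < σ (τ p.1)} :=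
    card_equiv (Equiv.prodComm _ _) fun p => by simp
  rw [two_mul, hσ, hστ, invNum]
  nth_rw 2 [hswap]
  simp only [card_filter]
  rw [← sum_add_distrib, ← sum_add_distrib, ← sum_add_distrib]
  -- for `i < j`, `σ` inverts `{τ i, τ j}` iff exactly one of `τ`, `σ * τ` inverts `(i, j)`
  refine sum_congr rfl fun p _ => ?_
  have hτ : p.1 ≠ p.2 → τ p.1 ≠ τ p.2 := fun h he => h (τ.injective he)
  have hσ : p.1 ≠ p.2 → σ (τ p.1) ≠ σ (τ p.2) := fun h he => hτ h (σ.injective he)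
  rcases lt_trichotomy p.1 p.2 with h | h | h
  · split_ifs <;> grind
  · simp [h]
  · split_ifs <;> grind

lemma invNum_mul_le (σ τ : Perm (Fin n)) : invNum (σ * τ) ≤ invNum σ + invNum τ := by
  have := invNum_add_invNum σ τ
  omega

lemma invNum_mul_eq_add_iff : invNum (σ * τ) = invNum σ + invNum τ ↔
    ∀ i j, i < j → τ j < τ i → σ (τ j) < σ (τ i) := by
  have key := invNum_add_invNum σ τ
  rw [show invNum (σ * τ) = invNum σ + invNum τ ↔
      #{p : Fin n × Fin n | p.1 < p.2 ∧ τ p.2 < τ p.1 ∧ σ (τ p.1) < σ (τ p.2)} = 0 by omega,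
    card_eq_zero, filter_eq_empty_iff]
  simp only [mem_univ, true_implies, Prod.forall, not_and, not_lt]
  refine forall₂_congr fun i j => imp_congr_right fun hij => imp_congr_right fun _ => ?_
  exact Ne.le_iff_lt fun h => hij.ne' (τ.injective (σ.injective h))

lemma invNum_mul_mul_eq_add_add_iff {u e v : Perm (Fin n)} :
    invNum (u * e * v) = invNum u + invNum e + invNum v ↔
      invNum (u * e) = invNum u + invNum e ∧ invNum (u * e * v) = invNum (u * e) + invNum v := by
  have := invNum_mul_le u e
  have := invNum_mul_le (u * e) v
  omega

end Inversions

section Factorization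

variable {w x u v : Perm (Fin n)}

lemma invNum_mul_eOf_eq_add_iff :
    invNum (u * eOf (shape w)) = invNum u + invNum (eOf (shape w)) ↔
      ∀ i j, i < j → level w (Phi w i) = level w (Phi w j) →
        (u * eOf (shape w)) j < (u * eOf (shape w)) i := by
  rw [invNum_mul_eq_add_iff]
  exact forall₂_congr fun i j => forall_congr' fun hij => by rw [eOf_shape_lt_iff hij]; rfl

lemma invNum_eq_invNum_add_inv_mul_iff :
    invNum w = invNum x + invNum (x⁻¹ * w) ↔ ∀ i j, i < j → x⁻¹ (w j) < x⁻¹ (w i) → w j < w i := by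
  have h := invNum_mul_eq_add_iff (σ := x) (τ := x⁻¹ * w)
  rw [mul_inv_cancel_left] at h
  rw [h]
  simp

lemma phi_inv_apply_lt_of_lt {i j : Fin n} (hij : i < j) (h : (Phi w)⁻¹ (w j) < (Phi w)⁻¹ (w i)) :
    w j < w i := by
  refine lt_of_not_ge fun hle => ?_
  have hlt := hle.lt_of_ne fun he => hij.ne (w.injective he)
  have hlev := level_lt_of_lt (w := w) hlt (by simpa using hij)
  have := antitone_level_comp_phi w h.le
  simp only [Function.comp_apply, Perm.coe_inv, apply_symm_apply] at this
  omega

lemma level_le_level_phi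
    (hblock : ∀ i j, i < j → level w (Phi w i) = level w (Phi w j) → x j < x i)
    (hasc : ∀ i j, i < j → x⁻¹ (w j) < x⁻¹ (w i) → w j < w i) (i : Fin n) :
    level w (x i) ≤ level w (Phi w i) := by
  generalize hs : level w (x i) = s
  induction s generalizing i with
  | zero => exact Nat.zero_le _
  | succ s ih =>
    rcases Nat.eq_zero_or_pos s with rfl | hs0
    · exact one_le_level w _
    obtain ⟨d, hcd, hpos, hd⟩ := exists_level_add_one_eq (w := w) (c := x i) (by omega)
    have hi : i < x⁻¹ d := by
      refine lt_of_not_ge fun hle => hcd.not_gt ?_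
      have hlt := hle.lt_of_ne fun he => hcd.ne (by rw [← he]; simp)
      simpa using hasc _ _ hpos (by simpa using hlt)
    have hlev : level w (Phi w (x⁻¹ d)) < level w (Phi w i) := by
      refine (antitone_level_comp_phi w hi.le).lt_of_ne fun he => hcd.not_gt ?_
      simpa using hblock _ _ hi he.symm
    have := ih (x⁻¹ d) (by simp only [Perm.coe_inv, apply_symm_apply]; omega)
    omega

lemma eq_phi_of
    (hblock : ∀ i j, i < j → level w (Phi w i) = level w (Phi w j) → x j < x i)
    (hasc : ∀ i j, i < j → x⁻¹ (w j) < x⁻¹ (w i) → w j < w i) : x = Phi w := by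
  have hle := level_le_level_phi hblock hasc
  have hsum : ∑ i, level w (x i) = ∑ i, level w (Phi w i) := by
    rw [Equiv.sum_comp x (level w), Equiv.sum_comp (Phi w) (level w)]
  have heq : level w ∘ x = level w ∘ Phi w :=
    funext fun i => (sum_eq_sum_iff_of_le fun i _ => hle i).mp hsum i (mem_univ i)
  refine phi_eq_iff.mpr ⟨heq ▸ antitone_level_comp_phi w, fun i j hij h => hblock i j hij ?_⟩
  have hi := congrFun heq i
  have hj := congrFun heq j
  simp only [Function.comp_apply] at hi hj
  omega

lemma invNum_eq_add_add_iff_mul_eOf_eq_phi (h : w = u * eOf (shape w) * v) :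
    invNum w = invNum u + invNum (eOf (shape w)) + invNum v ↔ u * eOf (shape w) = Phi w := by
  have hv : (u * eOf (shape w))⁻¹ * w = v := by
    rw [eq_comm, eq_inv_mul_iff_mul_eq]
    exact h.symm
  have hadd := invNum_mul_mul_eq_add_add_iff (u := u) (e := eOf (shape w)) (v := v)
  rw [← h] at hadd
  rw [hadd, ← hv, invNum_mul_eOf_eq_add_iff, invNum_eq_invNum_add_inv_mul_iff]
  refine ⟨fun ⟨hblock, hasc⟩ => eq_phi_of hblock hasc, fun hx => ?_⟩
  rw [hx]
  exact ⟨fun i j => phi_lt_phi_of_level_eq, fun i j => phi_inv_apply_lt_of_lt⟩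

lemma phi_factorization (w : Perm (Fin n)) :
    w = Phi w * eOf (shape w) * eOf (shape w) * ((Phi w)⁻¹ * w) ∧
      invNum w = invNum (Phi w * eOf (shape w)) + invNum (eOf (shape w)) +
        invNum ((Phi w)⁻¹ * w) := by
  have h : w = Phi w * eOf (shape w) * eOf (shape w) * ((Phi w)⁻¹ * w) := by
    rw [mul_assoc (Phi w), eOf_mul_self, mul_one, mul_inv_cancel_left]
  exact ⟨h, (invNum_eq_add_add_iff_mul_eOf_eq_phi h).mpr (by rw [mul_assoc, eOf_mul_self, mul_one])⟩

lemma phiInv_eq_eOf_mul (h : w = u * eOf (shape w) * v)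
    (hinv : invNum w = invNum u + invNum (eOf (shape w)) + invNum v) :
    PhiInv w = eOf (shape w) * v := by
  have h' : w⁻¹ = v⁻¹ * eOf (shape w⁻¹) * u⁻¹ := by
    rw [shape_inv]
    nth_rw 1 [h]
    rw [mul_inv_rev, mul_inv_rev, eOf_inv, mul_assoc]
  have hinv' : invNum w⁻¹ = invNum v⁻¹ + invNum (eOf (shape w⁻¹)) + invNum u⁻¹ := by
    rw [invNum_inv, invNum_inv, invNum_inv, shape_inv]
    omega
  rw [PhiInv, ← (invNum_eq_add_add_iff_mul_eOf_eq_phi h').mp hinv', shape_inv, mul_inv_rev,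
    eOf_inv, inv_inv]

end Factorization

/-- every `w` has a unique length-additive factorization
`w = u · e_{α(w)} · v`; moreover for these `u`, `v` one has `Φ(w) = u · e_{α(w)}` and
`Φ_inv(w) = e_{α(w)} · v`. -/
theorem unique_layered_factorization (n : ℕ) (w : Equiv.Perm (Fin n)) :
    (∃! p : Equiv.Perm (Fin n) × Equiv.Perm (Fin n),
        w = p.1 * eOf (shape w) * p.2 ∧
        invNum w = invNum p.1 + invNum (eOf (shape w)) + invNum p.2) ∧
    ∀ u v : Equiv.Perm (Fin n),
      w = u * eOf (shape w) * v →
      invNum w = invNum u + invNum (eOf (shape w)) + invNum v →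
      Phi w = u * eOf (shape w) ∧ PhiInv w = eOf (shape w) * v := by
  have hPhi : ∀ u v : Perm (Fin n), w = u * eOf (shape w) * v →
      invNum w = invNum u + invNum (eOf (shape w)) + invNum v → Phi w = u * eOf (shape w) :=
    fun u v h hinv => ((invNum_eq_add_add_iff_mul_eOf_eq_phi h).mp hinv).symm
  refine ⟨⟨(Phi w * eOf (shape w), (Phi w)⁻¹ * w), phi_factorization w, ?_⟩,
    fun u v h hinv => ⟨hPhi u v h hinv, phiInv_eq_eOf_mul h hinv⟩⟩
  rintro ⟨u, v⟩ ⟨h, hinv⟩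
  have hx := hPhi u v h hinv
  refine Prod.ext ?_ ?_
  · rw [hx, mul_assoc, eOf_mul_self, mul_one]
  · rw [hx, eq_inv_mul_iff_mul_eq, ← h]

end RajRegularity
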